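/- Let D be a double Boolean algebra. A pair (A,B) is a clopen object oriented protoconcept of K^T_pr(D) satisfying (A,B)⊓(A,B) = (A,B) or (A,B)⊔(A,B) = (A,B) if and only if (A,B) = (F_{¬x}, I_x) for some x ∈ D_p. Moreover, if (A,B)⊓(A,B) = (A,B) then x can be chosen in D_⊓, and if (A,B)⊔(A,B) = (A,B) then x can be chosen in D_⊔. -/

import Mathlib

universe u v

/-- A double Boolean algebra (dBa). -/
structure DBA (D : Type u) where
  sup : D → D → D
  inf : D → D → D
  neg : D → D
  dneg : D → D
  top : D
  bot : D
  ax1a : ∀ x y, inf (inf x x) y = inf x y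
  ax2a : ∀ x y, inf x y = inf y x
  ax3a : ∀ x y z, inf x (inf y z) = inf (inf x y) z
  ax4a : ∀ x, neg (inf x x) = neg x
  ax5a : ∀ x y, inf x (sup x y) = inf x x
  ax6a : ∀ x y z, inf x (neg (inf (neg y) (neg z))) =
      neg (inf (neg (inf x y)) (neg (inf x z)))
  ax7a : ∀ x y, inf x (neg (inf (neg x) (neg y))) = inf x x
  ax8a : ∀ x y, neg (neg (inf x y)) = inf x y
  ax9a : ∀ x, inf x (neg x) = bot
  ax10a : neg bot = inf top top
  ax11a : neg top = bot
  ax1b : ∀ x y, sup (sup x x) y = sup x y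
  ax2b : ∀ x y, sup x y = sup y x
  ax3b : ∀ x y z, sup x (sup y z) = sup (sup x y) z
  ax4b : ∀ x, dneg (sup x x) = dneg x
  ax5b : ∀ x y, sup x (inf x y) = sup x x
  ax6b : ∀ x y z, sup x (dneg (sup (dneg y) (dneg z))) =
      dneg (sup (dneg (sup x y)) (dneg (sup x z)))
  ax7b : ∀ x y, sup x (dneg (sup (dneg x) (dneg y))) = sup x x
  ax8b : ∀ x y, dneg (dneg (sup x y)) = sup x y
  ax9b : ∀ x, sup x (dneg x) = top
  ax10b : dneg top = sup bot bot
  ax11b : dneg bot = top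
  ax12 : ∀ x, sup (inf x x) (inf x x) = inf (sup x x) (sup x x)

namespace DBA

variable {D : Type u} {E : Type v}

/-- x ∨ y := ¬(¬x ⊓ ¬y) -/
def vee (A : DBA D) (x y : D) : D := A.neg (A.inf (A.neg x) (A.neg y))

/-- x ∧ y := ⌟(⌟x ⊔ ⌟y) -/
def wedge (A : DBA D) (x y : D) : D := A.dneg (A.sup (A.dneg x) (A.dneg y))

/-- The quasi-order ⊑. -/
def le (A : DBA D) (x y : D) : Prop := A.inf x y = A.inf x x ∧ A.sup x y = A.sup y y

def IsFilter (A : DBA D) (F : Set D) : Prop :=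
  (∀ x ∈ F, ∀ y ∈ F, A.inf x y ∈ F) ∧ ∀ x ∈ F, ∀ z, A.le x z → z ∈ F

def IsIdeal (A : DBA D) (I : Set D) : Prop :=
  (∀ x ∈ I, ∀ y ∈ I, A.sup x y ∈ I) ∧ ∀ x ∈ I, ∀ z, A.le z x → z ∈ I

def IsPrimaryFilter (A : DBA D) (F : Set D) : Prop :=
  A.IsFilter F ∧ F ≠ Set.univ ∧ ∀ x, x ∈ F ∨ A.neg x ∈ F

def IsPrimaryIdeal (A : DBA D) (I : Set D) : Prop :=
  A.IsIdeal I ∧ I ≠ Set.univ ∧ ∀ x, x ∈ I ∨ A.dneg x ∈ I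

def Pure (A : DBA D) : Prop := ∀ x, A.inf x x = x ∨ A.sup x x = x

def Contextual (A : DBA D) : Prop := ∀ x y, A.le x y → A.le y x → x = y

def FullyContextual (A : DBA D) : Prop :=
  A.Contextual ∧
    ∀ y x, A.inf y y = y → A.sup x x = x → A.sup y y = A.inf x x →
      ∃! z, A.inf z z = y ∧ A.sup z z = x

/-- D_p = D_⊓ ∪ D_⊔ -/
def Dp (A : DBA D) : Set D := {x | A.inf x x = x} ∪ {x | A.sup x x = x}

def IsHom (A : DBA D) (B : DBA E) (h : D → E) : Prop :=
  (∀ x y, h (A.inf x y) = B.inf (h x) (h y)) ∧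
  (∀ x y, h (A.sup x y) = B.sup (h x) (h y)) ∧
  (∀ x, h (A.neg x) = B.neg (h x)) ∧
  (∀ x, h (A.dneg x) = B.dneg (h x)) ∧
  h A.top = B.top ∧ h A.bot = B.bot

def IsHomOn (A : DBA D) (B : DBA E) (S : Set D) (h : D → E) : Prop :=
  (∀ x ∈ S, ∀ y ∈ S, h (A.inf x y) = B.inf (h x) (h y)) ∧
  (∀ x ∈ S, ∀ y ∈ S, h (A.sup x y) = B.sup (h x) (h y)) ∧
  (∀ x ∈ S, h (A.neg x) = B.neg (h x)) ∧
  (∀ x ∈ S, h (A.dneg x) = B.dneg (h x)) ∧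
  h A.top = B.top ∧ h A.bot = B.bot

end DBA

section FCA

variable {G : Type u} {M : Type v}

/-- B^◇ -/
def odia (R : G → M → Prop) (B : Set M) : Set G := {g | ∃ m ∈ B, R g m}
/-- B^□ -/
def obox (R : G → M → Prop) (B : Set M) : Set G := {g | ∀ m, R g m → m ∈ B}
/-- A^◆ -/
def obdia (R : G → M → Prop) (A : Set G) : Set M := {m | ∃ g ∈ A, R g m}
/-- A^■ -/
def obbox (R : G → M → Prop) (A : Set G) : Set M := {m | ∀ g, R g m → g ∈ A}

def pinf (R : G → M → Prop) (p q : Set G × Set M) : Set G × Set M :=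
  (p.1 ∪ q.1, obbox R (p.1 ∪ q.1))
def psup (R : G → M → Prop) (p q : Set G × Set M) : Set G × Set M :=
  (odia R (p.2 ∩ q.2), p.2 ∩ q.2)
def pneg (R : G → M → Prop) (p : Set G × Set M) : Set G × Set M :=
  (p.1ᶜ, obbox R p.1ᶜ)
def pdneg (R : G → M → Prop) (p : Set G × Set M) : Set G × Set M :=
  (odia R p.2ᶜ, p.2ᶜ)
def ptop : Set G × Set M := (∅, ∅)
def pbot : Set G × Set M := (Set.univ, Set.univ)
/-- quasi-order on pairs: (A,B) ⊑ (C,D) iff C ⊆ A and D ⊆ B -/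
def ple (p q : Set G × Set M) : Prop := q.1 ⊆ p.1 ∧ q.2 ⊆ p.2

/-- object oriented protoconcept -/
def IsProto (R : G → M → Prop) (p : Set G × Set M) : Prop :=
  odia R (obbox R p.1) = odia R p.2
/-- object oriented semiconcept -/
def IsSemi (R : G → M → Prop) (p : Set G × Set M) : Prop :=
  obbox R p.1 = p.2 ∨ odia R p.2 = p.1

/-- continuity of the relation R -/
def ContRel [TopologicalSpace G] [TopologicalSpace M] (R : G → M → Prop) : Prop :=
  ∀ O : Set M, IsOpen O → IsOpen (odia R O) ∧ IsOpen (obox R O)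
/-- continuity of the converse relation R⁻¹ -/
def ContRelInv [TopologicalSpace G] [TopologicalSpace M] (R : G → M → Prop) : Prop :=
  ∀ O : Set G, IsOpen O → IsOpen (obdia R O) ∧ IsOpen (obbox R O)

def IsClopenProto [TopologicalSpace G] [TopologicalSpace M] (R : G → M → Prop)
    (p : Set G × Set M) : Prop :=
  IsProto R p ∧ IsClopen p.1 ∧ IsClopen p.2

def IsClopenSemi [TopologicalSpace G] [TopologicalSpace M] (R : G → M → Prop)
    (p : Set G × Set M) : Prop :=
  IsSemi R p ∧ IsClopen p.1 ∧ IsClopen p.2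

def pmap {G' : Type*} {M' : Type*} (α : G → G') (β : M → M') (p : Set G' × Set M') :
    Set G × Set M := (α ⁻¹' p.1, β ⁻¹' p.2)

end FCA

section StoneDBA

variable {D : Type u}

/-- the set of primary filters of a dBa, as a type -/
def PrimF (A : DBA D) : Type u := {F : Set D // A.IsPrimaryFilter F}
/-- the set of primary ideals of a dBa, as a type -/
def PrimI (A : DBA D) : Type u := {I : Set D // A.IsPrimaryIdeal I}
/-- F ∇ I iff F ∩ I = ∅ -/
def nabla (A : DBA D) : PrimF A → PrimI A → Prop := fun F I => F.val ∩ I.val = ∅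
/-- F_x -/
def Fset (A : DBA D) (x : D) : Set (PrimF A) := {F | x ∈ F.val}
/-- I_x -/
def Iset (A : DBA D) (x : D) : Set (PrimI A) := {I | x ∈ I.val}

/-- the topology T on primary filters, with the F_x as a subbase of closed sets -/
def filtTop (A : DBA D) : TopologicalSpace (PrimF A) :=
  TopologicalSpace.generateFrom {U | ∃ x : D, U = (Fset A x)ᶜ}
/-- the topology J on primary ideals, with the I_x as a subbase of closed sets -/
def idlTop (A : DBA D) : TopologicalSpace (PrimI A) :=
  TopologicalSpace.generateFrom {U | ∃ x : D, U = (Iset A x)ᶜ}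

/-- the map h(x) := (F_{¬x}, I_x) -/
def protoEmb (A : DBA D) (x : D) : Set (PrimF A) × Set (PrimI A) :=
  (Fset A (A.neg x), Iset A x)

end StoneDBA

section SemiPrim

variable {G : Type u} {M : Type v} [TopologicalSpace G] [TopologicalSpace M]

/-- a primary filter of the dBa of clopen object oriented semiconcepts -/
def IsSemiPrimFilter (R : G → M → Prop) (F : Set (Set G × Set M)) : Prop :=
  (∀ p ∈ F, IsClopenSemi R p) ∧
  (∀ p ∈ F, ∀ q ∈ F, pinf R p q ∈ F) ∧
  (∀ p ∈ F, ∀ z, IsClopenSemi R z → ple p z → z ∈ F) ∧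
  F ≠ {p | IsClopenSemi R p} ∧
  (∀ p, IsClopenSemi R p → (p ∈ F ∨ pneg R p ∈ F))

/-- a primary ideal of the dBa of clopen object oriented semiconcepts -/
def IsSemiPrimIdeal (R : G → M → Prop) (I : Set (Set G × Set M)) : Prop :=
  (∀ p ∈ I, IsClopenSemi R p) ∧
  (∀ p ∈ I, ∀ q ∈ I, psup R p q ∈ I) ∧
  (∀ p ∈ I, ∀ z, IsClopenSemi R z → ple z p → z ∈ I) ∧
  I ≠ {p | IsClopenSemi R p} ∧
  (∀ p, IsClopenSemi R p → (p ∈ I ∨ pdneg R p ∈ I))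

def SemiPF (R : G → M → Prop) := {F : Set (Set G × Set M) // IsSemiPrimFilter R F}
def SemiPI (R : G → M → Prop) := {I : Set (Set G × Set M) // IsSemiPrimIdeal R I}

def semiPFTop (R : G → M → Prop) : TopologicalSpace (SemiPF R) :=
  TopologicalSpace.generateFrom
    {U | ∃ p, IsClopenSemi R p ∧ U = {F : SemiPF R | p ∈ F.val}ᶜ}
def semiPITop (R : G → M → Prop) : TopologicalSpace (SemiPI R) :=
  TopologicalSpace.generateFrom
    {U | ∃ p, IsClopenSemi R p ∧ U = {I : SemiPI R | p ∈ I.val}ᶜ}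

end SemiPrim

/-!
Primary filters, topologized by the sets `F_x`, form a compact space: if every finite part of a
set `S` lies in some primary filter, the elements forced by finitely many members of `S` form a
filter avoiding `⊥`, and by Zorn's lemma and the distributivity of `⊓` over `∨` a filter avoiding
a directed set extends to a primary filter avoiding it. The `F_x` form a Boolean algebra of sets
generating the topology, so a clopen set, being a finite union of them, is itself some `F_x`;
dually each clopen set of primary ideals is some `I_x`. The same separation gives
`(F_a)^■ = I_{¬a}` and `(I_b)^◇ = ∁ F_{b⊔b}`. With `h x = (F_{¬x}, I_x)`, a `⊓`-idempotent pair
with extent `F_a` is therefore `h (¬a ⊓ ¬a)` and a `⊔`-idempotent pair with intent `I_b` is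
`h (b ⊔ b)`; conversely `h x ⊓ h x = h (x ⊓ x)`, `h x ⊔ h x = h (x ⊔ x)`, and `h x` is a
protoconcept by the axiom `(x⊓x)⊔(x⊓x) = (x⊔x)⊓(x⊔x)`.
-/

open Set TopologicalSpace

namespace DBA

variable {D : Type u} (A : DBA D)

instance instAssociativeInf : Std.Associative A.inf := ⟨fun x y z => (A.ax3a x y z).symm⟩
instance instCommutativeInf : Std.Commutative A.inf := ⟨A.ax2a⟩

def op : DBA D where
  sup := A.inf
  inf := A.sup
  neg := A.dneg
  dneg := A.neg
  top := A.bot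
  bot := A.top
  ax1a := A.ax1b
  ax2a := A.ax2b
  ax3a := A.ax3b
  ax4a := A.ax4b
  ax5a := A.ax5b
  ax6a := A.ax6b
  ax7a := A.ax7b
  ax8a := A.ax8b
  ax9a := A.ax9b
  ax10a := A.ax10b
  ax11a := A.ax11b
  ax1b := A.ax1a
  ax2b := A.ax2a
  ax3b := A.ax3a
  ax4b := A.ax4a
  ax5b := A.ax5a
  ax6b := A.ax6a
  ax7b := A.ax7a
  ax8b := A.ax8a
  ax9b := A.ax9a
  ax10b := A.ax10a
  ax11b := A.ax11a
  ax12 := fun x => (A.ax12 x).symm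

theorem op_le {x y : D} : A.op.le x y ↔ A.le y x := by
  change A.sup x y = A.sup x x ∧ A.inf x y = A.inf y y ↔ _
  rw [A.ax2b x y, A.ax2a x y, and_comm]
  rfl

theorem isFilter_op {F : Set D} : A.op.IsFilter F ↔ A.IsIdeal F :=
  and_congr Iff.rfl <| forall₂_congr fun _ _ => forall_congr' fun _ => by rw [op_le]

theorem isPrimaryFilter_op {F : Set D} : A.op.IsPrimaryFilter F ↔ A.IsPrimaryIdeal F :=
  and_congr A.isFilter_op Iff.rfl

theorem inf_idem_inf (x y : D) : A.inf (A.inf x y) (A.inf x y) = A.inf x y := by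
  have h : A.inf (A.inf x y) (A.inf x y) = A.inf (A.inf x x) (A.inf y y) := by ac_rfl
  rw [h, A.ax1a, A.ax2a, A.ax1a, A.ax2a]

theorem sup_idem_sup (x y : D) : A.sup (A.sup x y) (A.sup x y) = A.sup x y :=
  A.op.inf_idem_inf x y

theorem le_refl (x : D) : A.le x x := ⟨rfl, rfl⟩

theorem le_trans {x y z : D} (hxy : A.le x y) (hyz : A.le y z) : A.le x z := by
  obtain ⟨m1, j1⟩ := hxy
  obtain ⟨m2, j2⟩ := hyz
  constructor
  · calc A.inf x z = A.inf (A.inf x y) z := by rw [m1, A.ax1a]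
      _ = A.inf (A.inf x y) y := by rw [← A.ax3a, m2, A.ax3a]
      _ = A.inf x x := by rw [m1, A.ax1a, m1]
  · calc A.sup x z = A.sup x (A.sup y z) := by rw [j2, A.ax2b x (A.sup z z), A.ax1b, A.ax2b]
      _ = A.sup z z := by rw [A.ax3b, j1, A.ax1b, j2]

theorem le_of_inf_eq {x y : D} (h : A.inf x y = x) : A.le x y := by
  refine ⟨?_, ?_⟩
  · conv_rhs => rw [← h]
    rw [A.inf_idem_inf, h]
  · rw [← h, A.ax2a x y, A.ax2b, A.ax5b]

theorem inf_le_left (x y : D) : A.le (A.inf x y) x := by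
  apply A.le_of_inf_eq
  have h : A.inf (A.inf x y) x = A.inf (A.inf x x) y := by ac_rfl
  rw [h, A.ax1a]

theorem inf_le_right (x y : D) : A.le (A.inf x y) y := by
  rw [A.ax2a]
  exact A.inf_le_left y x

theorem le_sup_left (x y : D) : A.le x (A.sup x y) :=
  A.op_le.1 (A.op.inf_le_left x y)

theorem le_sup_right (x y : D) : A.le y (A.sup x y) :=
  A.op_le.1 (A.op.inf_le_right x y)

theorem le_inf {c x y : D} (hc : A.inf c c = c) (hx : A.le c x) (hy : A.le c y) :
    A.le c (A.inf x y) := by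
  apply A.le_of_inf_eq
  rw [A.ax3a, hx.1, A.ax1a, hy.1, hc]

theorem inf_inf_le_inf_left (f g x : D) : A.le (A.inf (A.inf f g) x) (A.inf f x) := by
  apply A.le_of_inf_eq
  have h : A.inf (A.inf (A.inf f g) x) (A.inf f x) = A.inf (A.inf f f) (A.inf (A.inf x x) g) := by
    ac_rfl
  rw [h, A.ax1a, A.ax1a]
  ac_rfl

theorem inf_inf_le_inf_right (f g x : D) : A.le (A.inf (A.inf f g) x) (A.inf g x) := by
  rw [A.ax2a f g]
  exact A.inf_inf_le_inf_left g f x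

theorem inf_top (x : D) : A.inf x A.top = A.inf x x := by
  rw [← A.ax9b x, A.ax5a]

theorem inf_bot (x : D) : A.inf x A.bot = A.bot := by
  rw [← A.ax9a x, A.ax3a, A.ax1a]

theorem bot_le (x : D) : A.le A.bot x := by
  constructor
  · rw [A.ax2a, A.inf_bot, A.inf_bot]
  · rw [A.ax2b, ← A.ax9a x, A.ax5b]

theorem neg_neg (x : D) : A.neg (A.neg x) = A.inf x x := by
  rw [← A.ax4a x, A.ax8a]

theorem inf_idem_neg (x : D) : A.inf (A.neg x) (A.neg x) = A.neg x := by
  rw [← A.ax8a (A.neg x) (A.neg x), A.ax4a, A.neg_neg x, A.ax4a]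

theorem inf_vee_neg_self (z x : D) : A.inf z (A.vee x (A.neg x)) = A.inf z z := by
  rw [vee, A.ax9a, A.ax10a, A.ax3a, A.inf_top, A.inf_top, A.inf_idem_inf]

theorem vee_le {a b z : D} (ha : A.inf a z = a) (hb : A.inf b z = b) : A.le (A.vee a b) z := by
  apply A.le_of_inf_eq
  rw [A.ax2a, vee, A.ax6a, A.ax2a z a, A.ax2a z b, ha, hb]

/-- `h ⊓ h = (h ⊓ x) ∨ (h ⊓ ¬x)` by distributivity. -/
theorem inf_self_le_of_inf_le_of_inf_neg_le {h x v : D} (h₁ : A.le (A.inf h x) v)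
    (h₂ : A.le (A.inf h (A.neg x)) v) : A.le (A.inf h h) v := by
  rw [← A.inf_vee_neg_self h x, vee, A.ax6a]
  exact A.vee_le (by rw [h₁.1, A.inf_idem_inf]) (by rw [h₂.1, A.inf_idem_inf])

theorem isFilter_setOf_le {c : D} (hc : A.inf c c = c) : A.IsFilter {z | A.le c z} :=
  ⟨fun _ hx _ hy => A.le_inf hc hx hy, fun _ hx _ hz => A.le_trans hx hz⟩

theorem isIdeal_setOf_le {c : D} (hc : A.sup c c = c) : A.IsIdeal {z | A.le z c} := by
  have h := A.isFilter_op.1 (A.op.isFilter_setOf_le hc)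
  simp only [op_le] at h
  exact h

variable {A}

theorem IsFilter.directedOn {F : Set D} (hF : A.IsFilter F) : DirectedOn (flip A.le) F :=
  fun x hx y hy => ⟨A.inf x y, hF.1 x hx y hy, A.inf_le_left x y, A.inf_le_right x y⟩

theorem IsIdeal.directedOn {I : Set D} (hI : A.IsIdeal I) : DirectedOn A.le I :=
  fun x hx y hy => ⟨A.sup x y, hI.1 x hx y hy, A.le_sup_left x y, A.le_sup_right x y⟩

theorem isFilter_sUnion {c : Set (Set D)} (hc : ∀ F ∈ c, A.IsFilter F)
    (hchain : IsChain (· ⊆ ·) c) : A.IsFilter (⋃₀ c) := by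
  constructor
  · rintro x ⟨F, hF, hxF⟩ y ⟨G, hG, hyG⟩
    rcases hchain.total hF hG with h | h
    · exact ⟨G, hG, (hc G hG).1 x (h hxF) y hyG⟩
    · exact ⟨F, hF, (hc F hF).1 x hxF y (h hyG)⟩
  · rintro x ⟨F, hF, hxF⟩ z hz
    exact ⟨F, hF, (hc F hF).2 x hxF z hz⟩

theorem IsPrimaryFilter.bot_not_mem {F : Set D} (hF : A.IsPrimaryFilter F) : A.bot ∉ F :=
  fun h => hF.2.1 (eq_univ_of_forall fun z => hF.1.2 A.bot h z (A.bot_le z))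

theorem IsPrimaryFilter.top_mem {F : Set D} (hF : A.IsPrimaryFilter F) : A.top ∈ F :=
  (hF.2.2 A.top).resolve_right (A.ax11a ▸ hF.bot_not_mem)

theorem IsPrimaryFilter.inf_mem_iff {F : Set D} (hF : A.IsPrimaryFilter F) {x y : D} :
    A.inf x y ∈ F ↔ x ∈ F ∧ y ∈ F :=
  ⟨fun h => ⟨hF.1.2 _ h x (A.inf_le_left x y), hF.1.2 _ h y (A.inf_le_right x y)⟩,
    fun h => hF.1.1 x h.1 y h.2⟩

theorem IsPrimaryFilter.neg_mem_iff {F : Set D} (hF : A.IsPrimaryFilter F) {x : D} :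
    A.neg x ∈ F ↔ x ∉ F :=
  ⟨fun hn hx => hF.bot_not_mem (A.ax9a x ▸ hF.1.1 x hx _ hn), (hF.2.2 x).resolve_left⟩

theorem IsPrimaryFilter.vee_mem_iff {F : Set D} (hF : A.IsPrimaryFilter F) {x y : D} :
    A.vee x y ∈ F ↔ x ∈ F ∨ y ∈ F := by
  rw [vee, hF.neg_mem_iff, hF.inf_mem_iff, hF.neg_mem_iff, hF.neg_mem_iff]
  tauto

theorem IsPrimaryIdeal.bot_mem {I : Set D} (hI : A.IsPrimaryIdeal I) : A.bot ∈ I :=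
  (A.isPrimaryFilter_op.2 hI).top_mem

theorem IsPrimaryIdeal.sup_mem_iff {I : Set D} (hI : A.IsPrimaryIdeal I) {x y : D} :
    A.sup x y ∈ I ↔ x ∈ I ∧ y ∈ I :=
  (A.isPrimaryFilter_op.2 hI).inf_mem_iff

theorem IsPrimaryIdeal.dneg_mem_iff {I : Set D} (hI : A.IsPrimaryIdeal I) {x : D} :
    A.dneg x ∈ I ↔ x ∉ I :=
  (A.isPrimaryFilter_op.2 hI).neg_mem_iff

theorem IsPrimaryIdeal.wedge_mem_iff {I : Set D} (hI : A.IsPrimaryIdeal I) {x y : D} :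
    A.wedge x y ∈ I ↔ x ∈ I ∨ y ∈ I :=
  (A.isPrimaryFilter_op.2 hI).vee_mem_iff

theorem IsPrimaryIdeal.top_not_mem {I : Set D} (hI : A.IsPrimaryIdeal I) : A.top ∉ I :=
  (A.isPrimaryFilter_op.2 hI).bot_not_mem

variable (A)

def adjoin (F : Set D) (x : D) : Set D := {z | ∃ f ∈ F, A.le (A.inf f x) z}

theorem subset_adjoin (F : Set D) (x : D) : F ⊆ A.adjoin F x :=
  fun f hf => ⟨f, hf, A.inf_le_left f x⟩

theorem mem_adjoin {F : Set D} (hF : F.Nonempty) (x : D) : x ∈ A.adjoin F x :=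
  let ⟨f, hf⟩ := hF
  ⟨f, hf, A.inf_le_right f x⟩

theorem isFilter_adjoin {F : Set D} (hF : A.IsFilter F) (x : D) : A.IsFilter (A.adjoin F x) := by
  constructor
  · rintro z ⟨f, hf, hfz⟩ w ⟨g, hg, hgw⟩
    exact ⟨A.inf f g, hF.1 f hf g hg, A.le_inf (A.inf_idem_inf _ _)
      (A.le_trans (A.inf_inf_le_inf_left f g x) hfz)
      (A.le_trans (A.inf_inf_le_inf_right f g x) hgw)⟩
  · rintro z ⟨f, hf, hfz⟩ w hzw
    exact ⟨f, hf, A.le_trans hfz hzw⟩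

theorem exists_isPrimaryFilter_of_disjoint {F I : Set D} (hF : A.IsFilter F) (hFne : F.Nonempty)
    (hIne : I.Nonempty) (hI : DirectedOn A.le I) (hFI : Disjoint F I) :
    ∃ G, A.IsPrimaryFilter G ∧ F ⊆ G ∧ Disjoint G I := by
  obtain ⟨G, hFG, hmax⟩ := zorn_subset_nonempty {G | A.IsFilter G ∧ Disjoint G I}
    (fun c hc hchain _ => ⟨⋃₀ c, ⟨isFilter_sUnion (fun G hG => (hc hG).1) hchain,
      disjoint_sUnion_left.2 fun G hG => (hc hG).2⟩, fun _ => subset_sUnion_of_mem⟩)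
    F ⟨hF, hFI⟩
  obtain ⟨hG, hGI⟩ := hmax.prop
  refine ⟨G, ⟨hG, fun hGuniv => ?_, fun x => ?_⟩, hFG, hGI⟩
  · obtain ⟨i, hi⟩ := hIne
    exact disjoint_right.1 hGI hi (hGuniv ▸ mem_univ i)
  have adjoin_meets : ∀ y ∉ G, ∃ f ∈ G, ∃ z ∈ I, A.le (A.inf f y) z := by
    intro y hy
    by_contra! h
    have hext : Disjoint (A.adjoin G y) I :=
      disjoint_left.2 fun z ⟨f, hf, hfz⟩ hz => h f hf z hz hfz
    exact hy (hmax.eq_of_subset ⟨A.isFilter_adjoin hG y, hext⟩ (A.subset_adjoin G y) ▸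
      A.mem_adjoin (hFne.mono hFG) y)
  by_contra! hx
  obtain ⟨f, hf, z, hz, hfz⟩ := adjoin_meets x hx.1
  obtain ⟨g, hg, w, hw, hgw⟩ := adjoin_meets (A.neg x) hx.2
  obtain ⟨v, hv, hzv, hwv⟩ := hI z hz w hw
  have hfg : A.inf f g ∈ G := hG.1 f hf g hg
  have hle : A.le (A.inf (A.inf f g) (A.inf f g)) v := A.inf_self_le_of_inf_le_of_inf_neg_le
    (A.le_trans (A.inf_inf_le_inf_left f g x) (A.le_trans hfz hzv))
    (A.le_trans (A.inf_inf_le_inf_right f g _) (A.le_trans hgw hwv))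
  exact disjoint_left.1 hGI (hG.2 _ (hG.1 _ hfg _ hfg) v hle) hv

theorem exists_isPrimaryIdeal_of_disjoint {I F : Set D} (hI : A.IsIdeal I) (hIne : I.Nonempty)
    (hFne : F.Nonempty) (hF : DirectedOn (flip A.le) F) (hIF : Disjoint I F) :
    ∃ J, A.IsPrimaryIdeal J ∧ I ⊆ J ∧ Disjoint J F := by
  obtain ⟨J, hJ, hIJ, hJF⟩ := A.op.exists_isPrimaryFilter_of_disjoint (A.isFilter_op.2 hI) hIne
    hFne (hF.mono fun _ _ => A.op_le.2) hIF
  exact ⟨J, A.isPrimaryFilter_op.1 hJ, hIJ, hJF⟩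

theorem exists_isPrimaryFilter_superset {S : Set D}
    (h : ∀ T ⊆ S, T.Finite → ∃ F, A.IsPrimaryFilter F ∧ T ⊆ F) :
    ∃ F, A.IsPrimaryFilter F ∧ S ⊆ F := by
  let Φ : Set D := {z | ∃ T ⊆ S, T.Finite ∧ ∀ F, A.IsPrimaryFilter F → T ⊆ F → z ∈ F}
  have hΦ : A.IsFilter Φ := by
    constructor
    · rintro x ⟨T, hTS, hT, hx⟩ y ⟨T', hT'S, hT', hy⟩
      refine ⟨T ∪ T', union_subset hTS hT'S, hT.union hT', fun F hF hTF => ?_⟩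
      exact hF.inf_mem_iff.2 ⟨hx F hF (subset_union_left.trans hTF),
        hy F hF (subset_union_right.trans hTF)⟩
    · rintro x ⟨T, hTS, hT, hx⟩ z hxz
      exact ⟨T, hTS, hT, fun F hF hTF => hF.1.2 x (hx F hF hTF) z hxz⟩
  have hSΦ : S ⊆ Φ := fun s hs =>
    ⟨{s}, singleton_subset_iff.2 hs, finite_singleton s, fun _ _ hsF => hsF rfl⟩
  have hΦne : Φ.Nonempty :=
    ⟨A.top, ∅, empty_subset S, finite_empty, fun _ hF _ => hF.top_mem⟩
  have hbot : Disjoint Φ {A.bot} := disjoint_singleton_right.2 fun ⟨T, hTS, hT, hbot⟩ =>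
    let ⟨F, hF, hTF⟩ := h T hTS hT
    hF.bot_not_mem (hbot F hF hTF)
  obtain ⟨G, hG, hΦG, -⟩ := A.exists_isPrimaryFilter_of_disjoint hΦ hΦne (singleton_nonempty _)
    (fun _ hx _ hy => ⟨A.bot, rfl, hx ▸ A.le_refl _, hy ▸ A.le_refl _⟩) hbot
  exact ⟨G, hG, hSΦ.trans hΦG⟩

theorem exists_isPrimaryIdeal_superset {S : Set D}
    (h : ∀ T ⊆ S, T.Finite → ∃ I, A.IsPrimaryIdeal I ∧ T ⊆ I) :
    ∃ I, A.IsPrimaryIdeal I ∧ S ⊆ I := by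
  obtain ⟨I, hI, hSI⟩ := A.op.exists_isPrimaryFilter_superset fun T hTS hT =>
    let ⟨I, hI, hTI⟩ := h T hTS hT
    ⟨I, A.isPrimaryFilter_op.2 hI, hTI⟩
  exact ⟨I, A.isPrimaryFilter_op.1 hI, hSI⟩

end DBA

namespace BooleanSubalgebra

variable {X : Type*} [t : TopologicalSpace X] (𝓑 : BooleanSubalgebra (Set X))

theorem isClopen_iff_mem_of_eq_generateFrom [CompactSpace X] (ht : t = generateFrom 𝓑)
    {U : Set X} : IsClopen U ↔ U ∈ 𝓑 := by
  have hopen : ∀ V ∈ 𝓑, IsOpen V := fun V hV => ht ▸ isOpen_generateFrom_of_mem hV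
  refine ⟨fun hU => ?_, fun hU => ⟨isOpen_compl_iff.1 (hopen _ (𝓑.compl_mem hU)), hopen U hU⟩⟩
  have hbasis : IsTopologicalBasis (𝓑 : Set (Set X)) :=
    ⟨fun V hV W hW x hx => ⟨V ∩ W, 𝓑.inf_mem hV hW, hx, subset_rfl⟩,
      sUnion_eq_univ_iff.2 fun _ => ⟨univ, 𝓑.top_mem, trivial⟩, ht⟩
  obtain ⟨P, hP, hPfin, hUP⟩ := hU.isClosed.isCompact.elim_finite_subcover_image
    (b := {V ∈ 𝓑 | V ⊆ U}) (c := id) (fun V hV => hopen V hV.1) fun x hx => by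
      obtain ⟨V, hV, hxV, hVU⟩ := hbasis.exists_subset_of_mem_open hx hU.isOpen
      exact mem_biUnion ⟨hV, hVU⟩ hxV
  have hU_eq : U = ⋃₀ P :=
    (hUP.trans (by rw [sUnion_eq_biUnion]; rfl)).antisymm (sUnion_subset fun V hV => (hP hV).2)
  rw [hU_eq]
  exact 𝓑.supClosed.sSup_mem hPfin 𝓑.bot_mem fun V hV => (hP hV).1

end BooleanSubalgebra

section StoneSpace

variable {D : Type u} (A : DBA D)

instance : TopologicalSpace (PrimF A) := filtTop A

instance : TopologicalSpace (PrimI A) := idlTop A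

theorem Fset_inf (x y : D) : Fset A (A.inf x y) = Fset A x ∩ Fset A y :=
  ext fun F => F.2.inf_mem_iff

theorem Fset_vee (x y : D) : Fset A (A.vee x y) = Fset A x ∪ Fset A y :=
  ext fun F => F.2.vee_mem_iff

theorem Fset_neg (x : D) : Fset A (A.neg x) = (Fset A x)ᶜ :=
  ext fun F => F.2.neg_mem_iff

theorem Fset_bot : Fset A A.bot = ∅ :=
  eq_empty_of_forall_notMem fun F => F.2.bot_not_mem

theorem Iset_sup (x y : D) : Iset A (A.sup x y) = Iset A x ∩ Iset A y :=
  ext fun I => I.2.sup_mem_iff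

theorem Iset_wedge (x y : D) : Iset A (A.wedge x y) = Iset A x ∪ Iset A y :=
  ext fun I => I.2.wedge_mem_iff

theorem Iset_dneg (x : D) : Iset A (A.dneg x) = (Iset A x)ᶜ :=
  ext fun I => I.2.dneg_mem_iff

theorem Iset_top : Iset A A.top = ∅ :=
  eq_empty_of_forall_notMem fun I => I.2.top_not_mem

def fsetAlgebra : BooleanSubalgebra (Set (PrimF A)) where
  carrier := range (Fset A)
  supClosed' := by
    rintro _ ⟨x, rfl⟩ _ ⟨y, rfl⟩
    exact ⟨A.vee x y, Fset_vee A x y⟩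
  infClosed' := by
    rintro _ ⟨x, rfl⟩ _ ⟨y, rfl⟩
    exact ⟨A.inf x y, Fset_inf A x y⟩
  compl_mem' := by
    rintro _ ⟨x, rfl⟩
    exact ⟨A.neg x, Fset_neg A x⟩
  bot_mem' := ⟨A.bot, Fset_bot A⟩

def isetAlgebra : BooleanSubalgebra (Set (PrimI A)) where
  carrier := range (Iset A)
  supClosed' := by
    rintro _ ⟨x, rfl⟩ _ ⟨y, rfl⟩
    exact ⟨A.wedge x y, Iset_wedge A x y⟩
  infClosed' := by
    rintro _ ⟨x, rfl⟩ _ ⟨y, rfl⟩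
    exact ⟨A.sup x y, Iset_sup A x y⟩
  compl_mem' := by
    rintro _ ⟨x, rfl⟩
    exact ⟨A.dneg x, Iset_dneg A x⟩
  bot_mem' := ⟨A.top, Iset_top A⟩

theorem filtTop_eq_generateFrom : filtTop A = generateFrom (fsetAlgebra A) := by
  refine congrArg generateFrom (ext fun U => ⟨?_, ?_⟩)
  · rintro ⟨x, rfl⟩
    exact ⟨A.neg x, Fset_neg A x⟩
  · rintro ⟨x, rfl⟩
    exact ⟨A.neg x, by rw [Fset_neg, compl_compl]⟩

theorem idlTop_eq_generateFrom : idlTop A = generateFrom (isetAlgebra A) := by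
  refine congrArg generateFrom (ext fun U => ⟨?_, ?_⟩)
  · rintro ⟨x, rfl⟩
    exact ⟨A.dneg x, Iset_dneg A x⟩
  · rintro ⟨x, rfl⟩
    exact ⟨A.dneg x, by rw [Iset_dneg, compl_compl]⟩

instance compactSpace_primF : CompactSpace (PrimF A) := by
  refine compactSpace_generateFrom_of_compl_mem _ (filtTop_eq_generateFrom A)
    (fun _ => (fsetAlgebra A).compl_mem) fun P hP hfip => ?_
  obtain ⟨F, hF, hSF⟩ := A.exists_isPrimaryFilter_superset (S := {x | Fset A x ∈ P})
    fun T hTS hT => by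
      obtain ⟨F, hF⟩ := hfip (Fset A '' T) (image_subset_iff.2 hTS) (hT.image _)
      exact ⟨F.1, F.2, fun x hx => hF _ (mem_image_of_mem _ hx)⟩
  refine ⟨⟨F, hF⟩, fun V hV => ?_⟩
  obtain ⟨x, rfl⟩ := hP hV
  exact hSF hV

instance compactSpace_primI : CompactSpace (PrimI A) := by
  refine compactSpace_generateFrom_of_compl_mem _ (idlTop_eq_generateFrom A)
    (fun _ => (isetAlgebra A).compl_mem) fun P hP hfip => ?_
  obtain ⟨I, hI, hSI⟩ := A.exists_isPrimaryIdeal_superset (S := {x | Iset A x ∈ P})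
    fun T hTS hT => by
      obtain ⟨I, hI⟩ := hfip (Iset A '' T) (image_subset_iff.2 hTS) (hT.image _)
      exact ⟨I.1, I.2, fun x hx => hI _ (mem_image_of_mem _ hx)⟩
  refine ⟨⟨I, hI⟩, fun V hV => ?_⟩
  obtain ⟨x, rfl⟩ := hP hV
  exact hSI hV

theorem isClopen_iff_exists_Fset {U : Set (PrimF A)} : IsClopen U ↔ ∃ x, Fset A x = U :=
  (fsetAlgebra A).isClopen_iff_mem_of_eq_generateFrom (filtTop_eq_generateFrom A)

theorem isClopen_iff_exists_Iset {U : Set (PrimI A)} : IsClopen U ↔ ∃ x, Iset A x = U :=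
  (isetAlgebra A).isClopen_iff_mem_of_eq_generateFrom (idlTop_eq_generateFrom A)

theorem nabla_iff {F : PrimF A} {I : PrimI A} : nabla A F I ↔ Disjoint F.1 I.1 :=
  disjoint_iff_inter_eq_empty.symm

theorem obbox_nabla_Fset (a : D) : obbox (nabla A) (Fset A a) = Iset A (A.neg a) := by
  ext I
  refine ⟨fun h => ?_, fun ha F hFI => ?_⟩
  · by_contra ha
    obtain ⟨G, hG, haG, hGI⟩ := A.exists_isPrimaryFilter_of_disjoint
      (A.isFilter_setOf_le (A.inf_idem_neg a)) ⟨_, A.le_refl _⟩ ⟨A.bot, I.2.bot_mem⟩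
      I.2.1.directedOn (disjoint_left.2 fun z hz hzI => ha (I.2.1.2 z hzI _ hz))
    exact hG.neg_mem_iff.1 (haG (A.le_refl _)) (h ⟨G, hG⟩ ((nabla_iff A).2 hGI))
  · exact (F.2.2.2 a).resolve_right (disjoint_right.1 ((nabla_iff A).1 hFI) ha)

theorem odia_nabla_Iset (b : D) : odia (nabla A) (Iset A b) = (Fset A (A.sup b b))ᶜ := by
  ext F
  refine ⟨?_, fun hb => ?_⟩
  · rintro ⟨I, hbI, hFI⟩ hbF
    exact disjoint_left.1 ((nabla_iff A).1 hFI) hbF (I.2.1.1 b hbI b hbI)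
  · obtain ⟨J, hJ, hbJ, hJF⟩ := A.exists_isPrimaryIdeal_of_disjoint
      (A.isIdeal_setOf_le (A.sup_idem_sup b b)) ⟨_, A.le_refl _⟩ ⟨A.top, F.2.top_mem⟩
      F.2.1.directedOn (disjoint_left.2 fun z hz hzF => hb (F.2.1.2 z hzF _ hz))
    exact ⟨⟨J, hJ⟩, hbJ (A.le_sup_left b b), (nabla_iff A).2 hJF.symm⟩

theorem pinf_protoEmb_self (x : D) :
    pinf (nabla A) (protoEmb A x) (protoEmb A x) = protoEmb A (A.inf x x) := by
  simp only [pinf, protoEmb, union_self, obbox_nabla_Fset, A.neg_neg, A.ax4a]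

theorem psup_protoEmb_self (x : D) :
    psup (nabla A) (protoEmb A x) (protoEmb A x) = protoEmb A (A.sup x x) := by
  simp only [psup, protoEmb, inter_self, odia_nabla_Iset, Fset_neg, Iset_sup]

theorem isClopenProto_protoEmb (x : D) : IsClopenProto (nabla A) (protoEmb A x) := by
  refine ⟨?_, (isClopen_iff_exists_Fset A).2 ⟨_, rfl⟩, (isClopen_iff_exists_Iset A).2 ⟨x, rfl⟩⟩
  change odia (nabla A) (obbox (nabla A) (Fset A (A.neg x))) = odia (nabla A) (Iset A x)
  rw [obbox_nabla_Fset, A.neg_neg, odia_nabla_Iset, odia_nabla_Iset, A.ax12, Fset_inf, inter_self]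

theorem exists_eq_protoEmb_of_pinf_self {p : Set (PrimF A) × Set (PrimI A)} (hp : IsClopen p.1)
    (h : pinf (nabla A) p p = p) : ∃ x, A.inf x x = x ∧ p = protoEmb A x := by
  obtain ⟨a, ha⟩ := (isClopen_iff_exists_Fset A).1 hp
  have hp₁ : p.1 = (protoEmb A (A.neg a)).1 := by
    rw [protoEmb, Fset_neg, Fset_neg, compl_compl, ha]
  refine ⟨A.inf (A.neg a) (A.neg a), A.inf_idem_inf _ _, ?_⟩
  calc p = pinf (nabla A) p p := h.symm
    _ = pinf (nabla A) (protoEmb A (A.neg a)) (protoEmb A (A.neg a)) := by simp only [pinf, hp₁]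
    _ = _ := pinf_protoEmb_self A _

theorem exists_eq_protoEmb_of_psup_self {p : Set (PrimF A) × Set (PrimI A)} (hp : IsClopen p.2)
    (h : psup (nabla A) p p = p) : ∃ x, A.sup x x = x ∧ p = protoEmb A x := by
  obtain ⟨b, hb⟩ := (isClopen_iff_exists_Iset A).1 hp
  have hp₂ : p.2 = (protoEmb A b).2 := hb.symm
  refine ⟨A.sup b b, A.sup_idem_sup b b, ?_⟩
  calc p = psup (nabla A) p p := h.symm
    _ = psup (nabla A) (protoEmb A b) (protoEmb A b) := by simp only [psup, hp₂]
    _ = _ := psup_protoEmb_self A b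

end StoneSpace

/-- Characterization theorem: (A,B) is a clopen object oriented
protoconcept of K^T_pr(D) with (A,B)⊓(A,B) = (A,B) or (A,B)⊔(A,B) = (A,B) iff
(A,B) = (F_{¬x}, I_x) for some x ∈ D_p; moreover x ∈ D_⊓ in the ⊓-idempotent case and
x ∈ D_⊔ in the ⊔-idempotent case. -/
theorem stmt15 {D : Type u} (A : DBA D) (p : Set (PrimF A) × Set (PrimI A)) :
    ((@IsClopenProto (PrimF A) (PrimI A) (filtTop A) (idlTop A) (nabla A) p ∧
        (pinf (nabla A) p p = p ∨ psup (nabla A) p p = p)) ↔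
      (∃ x ∈ A.Dp, p = (Fset A (A.neg x), Iset A x))) ∧
    (@IsClopenProto (PrimF A) (PrimI A) (filtTop A) (idlTop A) (nabla A) p →
      pinf (nabla A) p p = p →
      ∃ x, A.inf x x = x ∧ p = (Fset A (A.neg x), Iset A x)) ∧
    (@IsClopenProto (PrimF A) (PrimI A) (filtTop A) (idlTop A) (nabla A) p →
      psup (nabla A) p p = p →
      ∃ x, A.sup x x = x ∧ p = (Fset A (A.neg x), Iset A x)) := by
  refine ⟨⟨?_, ?_⟩, fun hp h => exists_eq_protoEmb_of_pinf_self A hp.2.1 h,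
    fun hp h => exists_eq_protoEmb_of_psup_self A hp.2.2 h⟩
  · rintro ⟨hp, h | h⟩
    · obtain ⟨x, hx, rfl⟩ := exists_eq_protoEmb_of_pinf_self A hp.2.1 h
      exact ⟨x, Or.inl hx, rfl⟩
    · obtain ⟨x, hx, rfl⟩ := exists_eq_protoEmb_of_psup_self A hp.2.2 h
      exact ⟨x, Or.inr hx, rfl⟩
  · rintro ⟨x, hx | hx, rfl⟩
    · exact ⟨isClopenProto_protoEmb A x,
        Or.inl ((pinf_protoEmb_self A x).trans (congrArg (protoEmb A) hx))⟩
    · exact ⟨isClopenProto_protoEmb A x,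
        Or.inr ((psup_protoEmb_self A x).trans (congrArg (protoEmb A) hx))⟩
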